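/- arXiv:2310.09639 — 2 statements merged into one kernel-verified Lean document; each statement's English description precedes it below -/
import Mathlib

section
/- Let d ≥ 1, let f : ℝ^d → ℝ be ℓ-smooth, and let λ > 0. Define the smoothed function f_λ(x) = E_v[f(x + λ v)], where v is uniformly distributed on the Euclidean ball √d·B^d = {x ∈ ℝ^d : ‖x‖ ≤ √d}. Then for every x ∈ ℝ^d, ‖∇f(x) − ∇f_λ(x)‖ ≤ (ℓ/2) · λ · d^{3/2}. -/
open MeasureTheory Real

noncomputable section

/-- The uniform probability measure (normalized Lebesgue measure) on the closed Euclidean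
ball of radius `√d` centered at the origin in `ℝ^d`. -/
def ballUniform (d : ℕ) : Measure (EuclideanSpace ℝ (Fin d)) :=
  (volume (Metric.closedBall (0 : EuclideanSpace ℝ (Fin d)) (Real.sqrt d)))⁻¹ •
    volume.restrict (Metric.closedBall (0 : EuclideanSpace ℝ (Fin d)) (Real.sqrt d))

/-! Differentiating under the integral sign (dominated, since `∇f` is Lipschitz and `v` is
bounded) gives `∇f_λ(x) = E[∇f(x + λv)]`, so `‖∇f(x) − ∇f_λ(x)‖ ≤ E‖∇f(x) − ∇f(x + λv)‖ ≤ ℓλ E‖v‖`.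
Polar coordinates give the exact mean `E‖v‖ = d/(d+1) · √d ≤ d^{3/2}/2`; the crude bound
`‖v‖ ≤ √d` would not suffice for `d = 1`. -/

open Metric Set Module NNReal

section NormIntegral

variable {E : Type*} [NormedAddCommGroup E] [NormedSpace ℝ E] [FiniteDimensional ℝ E]
  [MeasurableSpace E] [BorelSpace E] [Nontrivial E] (μ : Measure E) [μ.IsAddHaarMeasure]

theorem setIntegral_norm_closedBall {R : ℝ} (hR : 0 ≤ R) :
    ∫ v in closedBall (0 : E) R, ‖v‖ ∂μ =
      finrank ℝ E / (finrank ℝ E + 1) * R * μ.real (closedBall 0 R) := by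
  have hn : 1 ≤ finrank ℝ E := finrank_pos
  have hball : closedBall (0 : E) R = norm ⁻¹' Iic R := by ext; simp
  have hpow : ∀ y : ℝ, y ^ (finrank ℝ E - 1) • (Iic R).indicator id y =
      (Iic R).indicator (· ^ finrank ℝ E) y := by
    intro y
    by_cases hy : y ∈ Iic R
    · rw [indicator_of_mem hy, indicator_of_mem hy, id, smul_eq_mul, ← pow_succ,
        Nat.sub_add_cancel hn]
    · rw [indicator_of_notMem hy, indicator_of_notMem hy, smul_zero]
  have hind : ∀ v : E, (norm ⁻¹' Iic R).indicator norm v = (Iic R).indicator id ‖v‖ :=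
    fun v => indicator_comp_right (g := id) norm
  rw [← integral_indicator measurableSet_closedBall, hball, funext hind,
    integral_fun_norm_addHaar μ ((Iic R).indicator id), funext hpow,
    integral_indicator measurableSet_Iic, Measure.restrict_restrict measurableSet_Iic,
    Iic_inter_Ioi, ← intervalIntegral.integral_of_le hR, integral_pow, ← hball,
    Measure.addHaar_real_closedBall μ 0 hR, nsmul_eq_mul, smul_eq_mul]
  field_simp
  ring

theorem setAverage_norm_closedBall {R : ℝ} (hR : 0 < R) :
    ⨍ v in closedBall (0 : E) R, ‖v‖ ∂μ = finrank ℝ E / (finrank ℝ E + 1) * R := by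
  have hpos : 0 < μ.real (closedBall 0 R) :=
    ENNReal.toReal_pos (measure_closedBall_pos μ 0 hR).ne' measure_closedBall_lt_top.ne
  rw [setAverage_eq, setIntegral_norm_closedBall μ hR.le, smul_eq_mul]
  field_simp

end NormIntegral

section Smoothing

variable {E F : Type*} [NormedAddCommGroup E] [NormedSpace ℝ E] [FiniteDimensional ℝ E]
  [MeasurableSpace E] [BorelSpace E] [NormedAddCommGroup F] {μ : Measure E} [IsFiniteMeasure μ]
  {R : ℝ}

theorem Continuous.integrable_of_ae_norm_le {g : E → F} (hg : Continuous g)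
    (hμ : ∀ᵐ v ∂μ, ‖v‖ ≤ R) : Integrable g μ := by
  have hμ_ball : ∀ᵐ v ∂μ, v ∈ closedBall (0 : E) R := by simpa using hμ
  rw [← Measure.restrict_eq_self_of_ae_mem hμ_ball]
  exact hg.continuousOn.integrableOn_compact (isCompact_closedBall 0 R)

variable [NormedSpace ℝ F] {f : E → F} {K : ℝ≥0}

theorem hasFDerivAt_integral_comp_add_smul (hf : Differentiable ℝ f)
    (hf' : LipschitzWith K (fderiv ℝ f)) (hμ : ∀ᵐ v ∂μ, ‖v‖ ≤ R) (c : ℝ) (x : E) :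
    HasFDerivAt (fun y => ∫ v, f (y + c • v) ∂μ) (∫ v, fderiv ℝ f (x + c • v) ∂μ) x := by
  refine hasFDerivAt_integral_of_dominated_of_fderiv_le
    (F' := fun y v => fderiv ℝ f (y + c • v))
    (bound := fun _ => ‖fderiv ℝ f x‖ + K * (1 + |c| * R))
    (ball_mem_nhds x one_pos) ?_ ?_ ?_ ?_ (integrable_const _) ?_
  · exact .of_forall fun y => (hf.continuous.comp (by fun_prop)).aestronglyMeasurable
  · exact (hf.continuous.comp (by fun_prop)).integrable_of_ae_norm_le hμ
  · exact (hf'.continuous.comp (by fun_prop)).aestronglyMeasurable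
  · filter_upwards [hμ] with v hv y hy
    have hshift : ‖y + c • v - x‖ ≤ 1 + |c| * R := calc
      ‖y + c • v - x‖ = ‖(y - x) + c • v‖ := by rw [add_sub_right_comm]
      _ ≤ ‖y - x‖ + |c| * ‖v‖ := by rw [← Real.norm_eq_abs, ← norm_smul]; exact norm_add_le _ _
      _ ≤ 1 + |c| * R := by
        gcongr
        exact (mem_ball_iff_norm.1 hy).le
    calc ‖fderiv ℝ f (y + c • v)‖
        ≤ ‖fderiv ℝ f x‖ + ‖fderiv ℝ f (y + c • v) - fderiv ℝ f x‖ := norm_le_insert' _ _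
      _ ≤ ‖fderiv ℝ f x‖ + K * (1 + |c| * R) := by
        gcongr
        exact (hf'.norm_sub_le _ _).trans (by gcongr)
  · refine .of_forall fun v y _ => ?_
    exact (hf _).hasFDerivAt.comp y ((hasFDerivAt_id y).add_const (c • v))

theorem norm_fderiv_sub_integral_fderiv_le [CompleteSpace F] [IsProbabilityMeasure μ]
    (hf' : LipschitzWith K (fderiv ℝ f)) (hμ : ∀ᵐ v ∂μ, ‖v‖ ≤ R) (c : ℝ) (x : E) :
    ‖fderiv ℝ f x - ∫ v, fderiv ℝ f (x + c • v) ∂μ‖ ≤ K * |c| * ∫ v, ‖v‖ ∂μ := by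
  have hint : Integrable (fun v => fderiv ℝ f (x + c • v)) μ :=
    (hf'.continuous.comp (by fun_prop)).integrable_of_ae_norm_le hμ
  calc ‖fderiv ℝ f x - ∫ v, fderiv ℝ f (x + c • v) ∂μ‖
      = ‖∫ v, (fderiv ℝ f x - fderiv ℝ f (x + c • v)) ∂μ‖ := by
        rw [integral_sub (integrable_const _) hint, integral_const, probReal_univ, one_smul]
    _ ≤ ∫ v, ‖fderiv ℝ f x - fderiv ℝ f (x + c • v)‖ ∂μ := norm_integral_le_integral_norm _
    _ ≤ ∫ v, K * |c| * ‖v‖ ∂μ := by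
        refine integral_mono ((integrable_const _).sub hint).norm
          ((continuous_norm.integrable_of_ae_norm_le hμ).const_mul _) fun v => ?_
        refine (hf'.norm_sub_le _ _).trans_eq ?_
        rw [sub_add_cancel_left, norm_neg, norm_smul, Real.norm_eq_abs, mul_assoc]
    _ = K * |c| * ∫ v, ‖v‖ ∂μ := integral_const_mul _ _

end Smoothing

theorem nonneg_of_forall_norm_sub_le_mul {E F : Type*} [NormedAddCommGroup E] [Nontrivial E]
    [SeminormedAddCommGroup F] {g : E → F} {L : ℝ}
    (hg : ∀ x y, ‖g x - g y‖ ≤ L * ‖x - y‖) : 0 ≤ L := by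
  obtain ⟨x, hx⟩ := exists_ne (0 : E)
  have hLx : 0 ≤ L * ‖x - 0‖ := (norm_nonneg _).trans (hg x 0)
  exact nonneg_of_mul_nonneg_left hLx (norm_pos_iff.2 (sub_ne_zero.2 hx))

theorem norm_gradient_sub_gradient {E : Type*} [NormedAddCommGroup E] [InnerProductSpace ℝ E]
    [CompleteSpace E] (f g : E → ℝ) (x y : E) :
    ‖gradient f x - gradient g y‖ = ‖fderiv ℝ f x - fderiv ℝ g y‖ := by
  rw [gradient, gradient, ← map_sub, LinearIsometryEquiv.norm_map]

section BallUniform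

variable {d : ℕ}

theorem isProbabilityMeasure_ballUniform (hd : 1 ≤ d) : IsProbabilityMeasure (ballUniform d) :=
  ProbabilityTheory.cond_isProbabilityMeasure_of_finite
    (measure_closedBall_pos _ _ (Real.sqrt_pos.2 (by exact_mod_cast hd))).ne'
    measure_closedBall_lt_top.ne

theorem ae_norm_le_ballUniform : ∀ᵐ v ∂ballUniform d, ‖v‖ ≤ √d := by
  refine Measure.ae_smul_measure ?_ _
  filter_upwards [ae_restrict_mem measurableSet_closedBall] with v hv
  exact mem_closedBall_zero_iff.1 hv

theorem integral_norm_ballUniform (hd : 1 ≤ d) : ∫ v, ‖v‖ ∂ballUniform d = d / (d + 1) * √d := by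
  have : Nonempty (Fin d) := ⟨⟨0, hd⟩⟩
  rw [ballUniform, ← setAverage_eq',
    setAverage_norm_closedBall _ (Real.sqrt_pos.2 (by exact_mod_cast hd)),
    finrank_euclideanSpace_fin]

theorem integral_norm_ballUniform_le (hd : 1 ≤ d) :
    ∫ v, ‖v‖ ∂ballUniform d ≤ d ^ ((3 : ℝ) / 2) / 2 := by
  have hd' : (1 : ℝ) ≤ d := by exact_mod_cast hd
  have hpow : (d : ℝ) ^ ((3 : ℝ) / 2) = d * √d := by
    rw [show (3 : ℝ) / 2 = 1 + 1 / 2 by norm_num, Real.rpow_add (by linarith), Real.rpow_one,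
      ← Real.sqrt_eq_rpow]
  rw [integral_norm_ballUniform hd, hpow, mul_div_right_comm]
  gcongr
  linarith

end BallUniform

theorem gradient_smoothed_close
    (d : ℕ) (hd : 1 ≤ d) (ell lam : ℝ) (hlam : 0 < lam)
    (f : EuclideanSpace ℝ (Fin d) → ℝ)
    (hf : Differentiable ℝ f)
    (hsmooth : ∀ x y : EuclideanSpace ℝ (Fin d),
      ‖gradient f x - gradient f y‖ ≤ ell * ‖x - y‖) :
    ∀ x : EuclideanSpace ℝ (Fin d),
      ‖gradient f x - gradient (fun y => ∫ v, f (y + lam • v) ∂(ballUniform d)) x‖ ≤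
        (ell / 2) * lam * (d : ℝ) ^ ((3 : ℝ) / 2) := by
  intro x
  have := isProbabilityMeasure_ballUniform hd
  have : Nonempty (Fin d) := ⟨⟨0, hd⟩⟩
  have hfd : ∀ a b, ‖fderiv ℝ f a - fderiv ℝ f b‖ ≤ ell * ‖a - b‖ := fun a b => by
    rw [← norm_gradient_sub_gradient]; exact hsmooth a b
  have hell : 0 ≤ ell := nonneg_of_forall_norm_sub_le_mul hfd
  have hLip : LipschitzWith ⟨ell, hell⟩ (fderiv ℝ f) := lipschitzWith_iff_norm_sub_le.2 hfd
  rw [norm_gradient_sub_gradient, (hasFDerivAt_integral_comp_add_smul hf hLip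
    ae_norm_le_ballUniform lam x).fderiv]
  calc _ ≤ ell * |lam| * ∫ v, ‖v‖ ∂ballUniform d :=
        norm_fderiv_sub_integral_fderiv_le hLip ae_norm_le_ballUniform lam x
    _ ≤ ell * lam * (d ^ ((3 : ℝ) / 2) / 2) := by
        rw [abs_of_pos hlam]
        gcongr
        exact integral_norm_ballUniform_le hd
    _ = (ell / 2) * lam * (d : ℝ) ^ ((3 : ℝ) / 2) := by ring
end
end

section
/- Let d ≥ 1, let f : ℝ^d → ℝ be ℓ-smooth, and let λ > 0. Define the two-point zeroth-order gradient estimator g_λ(x) = ((f(x + λu) − f(x − λu)) / (2λ)) · u, where u is uniformly distributed on the Euclidean sphere √d·S^{d−1} = {x ∈ ℝ^d : ‖x‖ = √d}. Then for every x ∈ ℝ^d, E_u[‖g_λ(x)‖²] ≤ 2d · ‖∇f(x)‖² + (ℓ²/2) · λ² · d³. -/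
open MeasureTheory Real
open scoped RealInnerProductSpace ENNReal

noncomputable section

/-- The uniform (rotation-invariant) probability measure on the sphere of radius `√d`
centered at the origin in `ℝ^d`. -/
def IsUniformOnSphere (d : ℕ) (μ : Measure (EuclideanSpace ℝ (Fin d))) : Prop :=
  IsProbabilityMeasure μ ∧
  μ (Metric.sphere (0 : EuclideanSpace ℝ (Fin d)) (Real.sqrt d)) = 1 ∧
  ∀ T : EuclideanSpace ℝ (Fin d) ≃ₗᵢ[ℝ] EuclideanSpace ℝ (Fin d), Measure.map T μ = μ

/-!
By `ℓ`-smoothness, `f (x + h) - f (x - h) = 2 ⟪∇f x, h⟫ + e` with `|e| ≤ ℓ ‖h‖²`. With `h = λ u` and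
`‖u‖² = d`, the estimator is `(⟪∇f x, u⟫ + ε) • u` with `|ε| ≤ ℓ λ d / 2`, so `(a + b)² ≤ 2a² + 2b²`
bounds its squared norm by `2 d ⟪∇f x, u⟫² + ℓ² λ² d³ / 2`. Rotation invariance makes the second
moment isotropic: the reflection exchanging two vectors of equal norm exchanges their moments
`∫ ⟪v, u⟫²`, and summing these over an orthonormal basis gives
`d · ∫ ⟪v, u⟫² = ‖v‖² ∫ ‖u‖² = ‖v‖² d`.
-/

section Smooth

variable {F : Type*} [NormedAddCommGroup F] [InnerProductSpace ℝ F] [CompleteSpace F]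
  {f : F → ℝ} {ell : ℝ}

theorem abs_sub_sub_inner_gradient_le (hf : Differentiable ℝ f)
    (hsmooth : ∀ x y : F, ‖gradient f x - gradient f y‖ ≤ ell * ‖x - y‖) (x h : F) :
    |f (x + h) - f x - ⟪gradient f x, h⟫| ≤ ell / 2 * ‖h‖ ^ 2 := by
  set φ : ℝ → ℝ := fun t => f (x + t • h) - f x - t * ⟪gradient f x, h⟫
  have hφ : ∀ t, HasDerivAt φ ⟪gradient f (x + t • h) - gradient f x, h⟫ t := by
    intro t
    have hline : HasDerivAt (fun s : ℝ => x + s • h) h t := by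
      simpa using ((hasDerivAt_id t).smul_const h).const_add x
    have hcomp := (hf (x + t • h)).hasGradientAt.hasFDerivAt.comp_hasDerivAt t hline
    refine ((hcomp.sub_const (f x)).sub ((hasDerivAt_id t).mul_const _)).congr_deriv ?_
    rw [InnerProductSpace.toDual_apply_apply, inner_sub_left, one_mul]
  have hB : ∀ t, HasDerivAt (fun t : ℝ => ell / 2 * ‖h‖ ^ 2 * t ^ 2) (ell * ‖h‖ ^ 2 * t) t := by
    intro t
    refine ((hasDerivAt_pow 2 t).const_mul (ell / 2 * ‖h‖ ^ 2)).congr_deriv ?_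
    ring
  have hbound : ∀ t ∈ Set.Ico (0 : ℝ) 1,
      ‖⟪gradient f (x + t • h) - gradient f x, h⟫‖ ≤ ell * ‖h‖ ^ 2 * t := by
    intro t ht
    calc ‖⟪gradient f (x + t • h) - gradient f x, h⟫‖
        ≤ ‖gradient f (x + t • h) - gradient f x‖ * ‖h‖ := norm_inner_le_norm _ _
      _ ≤ ell * ‖x + t • h - x‖ * ‖h‖ := by gcongr; exact hsmooth _ _
      _ = ell * ‖h‖ ^ 2 * t := by
        rw [add_sub_cancel_left, norm_smul, Real.norm_of_nonneg ht.1]; ring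
  have := image_norm_le_of_norm_deriv_right_le_deriv_boundary
    (fun t _ => (hφ t).continuousAt.continuousWithinAt) (fun t _ => (hφ t).hasDerivWithinAt)
    (by simp [φ]) hB hbound (Set.right_mem_Icc.2 zero_le_one)
  simpa [φ] using this

theorem abs_sub_sub_two_inner_gradient_le (hf : Differentiable ℝ f)
    (hsmooth : ∀ x y : F, ‖gradient f x - gradient f y‖ ≤ ell * ‖x - y‖) (x h : F) :
    |f (x + h) - f (x - h) - 2 * ⟪gradient f x, h⟫| ≤ ell * ‖h‖ ^ 2 := by
  have hplus := abs_sub_sub_inner_gradient_le hf hsmooth x h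
  have hminus := abs_sub_sub_inner_gradient_le hf hsmooth x (-h)
  rw [← sub_eq_add_neg, inner_neg_right, norm_neg] at hminus
  calc |f (x + h) - f (x - h) - 2 * ⟪gradient f x, h⟫|
      = |(f (x + h) - f x - ⟪gradient f x, h⟫) - (f (x - h) - f x - -⟪gradient f x, h⟫)| := by
        congr 1; ring
    _ ≤ ell / 2 * ‖h‖ ^ 2 + ell / 2 * ‖h‖ ^ 2 := (abs_sub _ _).trans (add_le_add hplus hminus)
    _ = ell * ‖h‖ ^ 2 := by ring

def twoPointEstimator (f : F → ℝ) (lam : ℝ) (x u : F) : F :=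
  ((f (x + lam • u) - f (x - lam • u)) / (2 * lam)) • u

theorem norm_twoPointEstimator_sq_le (hf : Differentiable ℝ f)
    (hsmooth : ∀ x y : F, ‖gradient f x - gradient f y‖ ≤ ell * ‖x - y‖)
    {lam : ℝ} (hlam : 0 < lam) (x u : F) :
    ‖twoPointEstimator f lam x u‖ ^ 2 ≤
      2 * ‖u‖ ^ 2 * ⟪gradient f x, u⟫ ^ 2 + ell ^ 2 / 2 * lam ^ 2 * (‖u‖ ^ 2) ^ 3 := by
  set c := (f (x + lam • u) - f (x - lam • u)) / (2 * lam)
  set p := ⟪gradient f x, u⟫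
  have herr : |c - p| ≤ ell * lam * ‖u‖ ^ 2 / 2 := by
    have h := abs_sub_sub_two_inner_gradient_le hf hsmooth x (lam • u)
    rw [real_inner_smul_right, norm_smul, Real.norm_of_nonneg hlam.le] at h
    have hdiff : c - p = (f (x + lam • u) - f (x - lam • u) - 2 * (lam * p)) / (2 * lam) := by
      simp only [c]; field_simp
    rw [hdiff, abs_div, abs_of_pos (by positivity : (0 : ℝ) < 2 * lam), div_le_iff₀ (by positivity)]
    linarith
  have hc_sq : c ^ 2 ≤ 2 * p ^ 2 + ell ^ 2 * lam ^ 2 * (‖u‖ ^ 2) ^ 2 / 2 := by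
    have := sq_le_sq' (abs_le.1 herr).1 (abs_le.1 herr).2
    nlinarith [sq_nonneg (c - 2 * p)]
  rw [twoPointEstimator, norm_smul, mul_pow, Real.norm_eq_abs, sq_abs]
  nlinarith [sq_nonneg ‖u‖]

end Smooth

section Isotropy

variable {F : Type*} [NormedAddCommGroup F] [InnerProductSpace ℝ F]
  [MeasurableSpace F] [BorelSpace F] {μ : Measure F}

theorem integrable_inner_sq (hint : Integrable (fun u => ‖u‖ ^ 2) μ) (v : F) :
    Integrable (fun u => ⟪v, u⟫ ^ 2) μ := by
  refine (hint.const_mul (‖v‖ ^ 2)).mono' (by fun_prop) (ae_of_all _ fun u => ?_)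
  rw [norm_pow, Real.norm_eq_abs, ← mul_pow]
  exact pow_le_pow_left₀ (abs_nonneg _) (abs_real_inner_le_norm v u) 2

theorem integral_inner_sq_eq_of_norm_eq
    (hμ : ∀ T : F ≃ₗᵢ[ℝ] F, μ.map T = μ) {v w : F} (h : ‖v‖ = ‖w‖) :
    ∫ u, ⟪v, u⟫ ^ 2 ∂μ = ∫ u, ⟪w, u⟫ ^ 2 ∂μ := by
  set T := Submodule.reflection (ℝ ∙ (v - w))ᗮ
  have hTv : T v = w := Submodule.reflection_sub h
  conv_lhs => rw [← hμ T]
  rw [← T.coe_toMeasurableEquiv, integral_map_equiv]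
  congr! 3 with u
  rw [T.coe_toMeasurableEquiv, ← hTv, ← T.inner_map_map v (T u), Submodule.reflection_reflection]

theorem finrank_mul_integral_inner_sq_of_norm_eq_one [FiniteDimensional ℝ F]
    (hμ : ∀ T : F ≃ₗᵢ[ℝ] F, μ.map T = μ) (hint : Integrable (fun u => ‖u‖ ^ 2) μ)
    {e : F} (he : ‖e‖ = 1) :
    Module.finrank ℝ F * ∫ u, ⟪e, u⟫ ^ 2 ∂μ = ∫ u, ‖u‖ ^ 2 ∂μ := by
  set b := stdOrthonormalBasis ℝ F
  calc Module.finrank ℝ F * ∫ u, ⟪e, u⟫ ^ 2 ∂μ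
      = ∑ i, ∫ u, ⟪b i, u⟫ ^ 2 ∂μ := by
        rw [Finset.sum_congr rfl fun i _ =>
          integral_inner_sq_eq_of_norm_eq hμ ((b.orthonormal.1 i).trans he.symm)]
        simp
    _ = ∫ u, ‖u‖ ^ 2 ∂μ := by
        rw [← integral_finsetSum _ fun i _ => integrable_inner_sq hint _]
        simp_rw [b.sum_sq_inner_right]

theorem finrank_mul_integral_inner_sq [FiniteDimensional ℝ F]
    (hμ : ∀ T : F ≃ₗᵢ[ℝ] F, μ.map T = μ) (hint : Integrable (fun u => ‖u‖ ^ 2) μ) (v : F) :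
    Module.finrank ℝ F * ∫ u, ⟪v, u⟫ ^ 2 ∂μ = ‖v‖ ^ 2 * ∫ u, ‖u‖ ^ 2 ∂μ := by
  obtain rfl | hv := eq_or_ne v 0
  · simp
  have hv' : ‖v‖ ≠ 0 := norm_ne_zero_iff.2 hv
  have hscale : ∀ u, ⟪v, u⟫ ^ 2 = ‖v‖ ^ 2 * ⟪‖v‖⁻¹ • v, u⟫ ^ 2 := fun u => by
    rw [real_inner_smul_left]; field_simp
  simp_rw [hscale, integral_const_mul]
  rw [mul_left_comm, finrank_mul_integral_inner_sq_of_norm_eq_one hμ hint]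
  rw [norm_smul, norm_inv, norm_norm, inv_mul_cancel₀ hv']

end Isotropy

theorem zo_gradient_second_moment_general
    (d : ℕ) (μ : Measure (EuclideanSpace ℝ (Fin d)))
    (hμ : IsUniformOnSphere d μ)
    (ell lam : ℝ) (hlam : 0 < lam)
    (f : EuclideanSpace ℝ (Fin d) → ℝ)
    (hf : Differentiable ℝ f)
    (hsmooth : ∀ x y : EuclideanSpace ℝ (Fin d),
      ‖gradient f x - gradient f y‖ ≤ ell * ‖x - y‖) :
    ∀ x : EuclideanSpace ℝ (Fin d),
      (∫ u, ‖((f (x + lam • u) - f (x - lam • u)) / (2 * lam)) • u‖ ^ 2 ∂μ) ≤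
        2 * d * ‖gradient f x‖ ^ 2 + (ell ^ 2 / 2) * lam ^ 2 * d ^ 3 := by
  intro x
  obtain ⟨hprob, hsphere, hinv⟩ := hμ
  have hnorm : ∀ᵐ u ∂μ, ‖u‖ ^ 2 = d := by
    filter_upwards [(mem_ae_iff_prob_eq_one Metric.isClosed_sphere.measurableSet).2 hsphere]
      with u hu
    rw [mem_sphere_zero_iff_norm.1 hu, sq_sqrt d.cast_nonneg]
  have hint : Integrable (fun u => ‖u‖ ^ 2) μ :=
    (integrable_const (d : ℝ)).congr (hnorm.mono fun u hu => hu.symm)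
  have hiso : (d : ℝ) * ∫ u, ⟪gradient f x, u⟫ ^ 2 ∂μ = ‖gradient f x‖ ^ 2 * d := by
    simpa [integral_congr_ae hnorm] using finrank_mul_integral_inner_sq hinv hint (gradient f x)
  have hbound :
      Integrable (fun u => 2 * d * ⟪gradient f x, u⟫ ^ 2 + ell ^ 2 / 2 * lam ^ 2 * d ^ 3) μ :=
    ((integrable_inner_sq hint _).const_mul _).add (integrable_const _)
  calc (∫ u, ‖twoPointEstimator f lam x u‖ ^ 2 ∂μ)
      ≤ ∫ u, 2 * d * ⟪gradient f x, u⟫ ^ 2 + ell ^ 2 / 2 * lam ^ 2 * d ^ 3 ∂μ := by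
        refine integral_mono_of_nonneg (ae_of_all _ fun u => by positivity) hbound ?_
        filter_upwards [hnorm] with u hu
        simpa only [hu] using norm_twoPointEstimator_sq_le hf hsmooth hlam x u
    _ = 2 * d * ‖gradient f x‖ ^ 2 + ell ^ 2 / 2 * lam ^ 2 * d ^ 3 := by
        rw [integral_add ((integrable_inner_sq hint _).const_mul _) (integrable_const _),
          integral_const_mul, mul_assoc, hiso, integral_const, probReal_univ, one_smul]
        ring

theorem zo_gradient_second_moment
    (d : ℕ) (hd : 1 ≤ d) (μ : Measure (EuclideanSpace ℝ (Fin d)))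
    (hμ : IsUniformOnSphere d μ)
    (ell lam : ℝ) (hlam : 0 < lam)
    (f : EuclideanSpace ℝ (Fin d) → ℝ)
    (hf : Differentiable ℝ f)
    (hsmooth : ∀ x y : EuclideanSpace ℝ (Fin d),
      ‖gradient f x - gradient f y‖ ≤ ell * ‖x - y‖) :
    ∀ x : EuclideanSpace ℝ (Fin d),
      (∫ u, ‖((f (x + lam • u) - f (x - lam • u)) / (2 * lam)) • u‖ ^ 2 ∂μ) ≤
        2 * d * ‖gradient f x‖ ^ 2 + (ell ^ 2 / 2) * lam ^ 2 * d ^ 3 :=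
  zo_gradient_second_moment_general d μ hμ ell lam hlam f hf hsmooth
end
end
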